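/- arXiv:math/0207073 — 4 statements merged into one kernel-verified Lean document; each statement's English description precedes it below -/
import Mathlib

section
/- Let k be a field of characteristic zero and λ ∈ k* of multiplicative order n. The center of the algebra A generated by x, y, z with relations xy - yx = 1, xz = λzx, yz = λ⁻¹zy is exactly the polynomial subalgebra k[z^n] generated by z^n. -/
/-!
For `h = x * y` one has `[h, x] = -x`, `[h, y] = y` and `[h, z] = 0`, so `ad h` acts on the PBW
monomial `x^a y^b z^c` by the scalar `b - a`; in characteristic zero a central element is therefore
a combination of the `x^t y^t z^c`. Comparing the coefficients of `x^t y^(t+1) z^c` in `y m = m y`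
gives `(1 - u^c) m_{t,t,c} = (t + 1) m_{t+1,t+1,c}`. If `u^c ≠ 1` this propagates a nonzero
coefficient upwards forever, contradicting finite support; if `u^c = 1` it kills every coefficient
with `t > 0`. What survives are the `z^c` with `n ∣ c`, and `z^n` is central because it
`u^n`-commutes with `x` and `y`.
-/

section

variable {k A : Type*} [Field k] [Ring A] [Algebra k A]

theorem pow_mul_eq_smul_mul_pow {s t : A} {c : k} (h : t * s = c • (s * t)) (m : ℕ) :
    t ^ m * s = c ^ m • (s * t ^ m) := by
  induction m with
  | zero => simp
  | succ m ih =>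
    rw [pow_succ, mul_assoc, h, mul_smul_comm, ← mul_assoc, ih, smul_mul_assoc, smul_smul,
      mul_assoc, ← pow_succ, ← pow_succ']

theorem commute_pow_of_mul_eq_smul_mul {s t : A} {c : k} (h : t * s = c • (s * t)) {m : ℕ}
    (hc : c ^ m = 1) : Commute (t ^ m) s := by
  rw [Commute, SemiconjBy, pow_mul_eq_smul_mul_pow h, hc, one_smul]

theorem mul_eq_inv_smul_mul_of_mul_eq_smul_mul {s t : A} {c : kˣ}
    (h : s * t = (c : k) • (t * s)) : t * s = ((c⁻¹ : kˣ) : k) • (s * t) := by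
  rw [h, smul_smul, Units.inv_mul, one_smul]

theorem commutator_mul_of_commutator_eq_smul {h P Q : A} {α β : k}
    (hP : h * P - P * h = α • P) (hQ : h * Q - Q * h = β • Q) :
    h * (P * Q) - P * Q * h = (α + β) • (P * Q) := by
  have : h * (P * Q) - P * Q * h = (h * P - P * h) * Q + P * (h * Q - Q * h) := by noncomm_ring
  rw [this, hP, hQ, smul_mul_assoc, mul_smul_comm, add_smul]

theorem commutator_pow_of_commutator_eq_smul {h P : A} {α : k}
    (hP : h * P - P * h = α • P) (a : ℕ) : h * P ^ a - P ^ a * h = (a * α) • P ^ a := by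
  induction a with
  | zero => simp
  | succ a ih =>
    rw [pow_succ, commutator_mul_of_commutator_eq_smul ih hP]
    push_cast
    ring_nf

theorem Module.Basis.repr_apply_of_apply_basis_eq_smul {ι M : Type*} [AddCommGroup M]
    [Module k M]
    (b : Module.Basis ι k M) (T : M →ₗ[k] M) (μ : ι → k) (hT : ∀ i, T (b i) = μ i • b i)
    (m : M) (i : ι) : b.repr (T m) i = μ i * b.repr m i := by
  classical
  have key : (b.coord i).comp T = μ i • b.coord i := b.ext fun j => by
    by_cases hij : j = i
    · subst hij; simp [hT]
    · simp [hT, hij]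
  simpa using LinearMap.congr_fun key m

theorem Module.Basis.mem_center_of_commute {ι : Type*} (b : Module.Basis ι k A) {a : A}
    (h : ∀ i, Commute (b i) a) : a ∈ Subalgebra.center k A := by
  have key : LinearMap.mulRight k a = LinearMap.mulLeft k a := b.ext fun i => (h i).eq
  exact Subalgebra.mem_center_iff.mpr fun g => LinearMap.congr_fun key g

theorem eq_zero_of_hasFiniteSupport_of_succ {M : Type*} [Zero M] {g : ℕ → M}
    (hg : g.HasFiniteSupport) (h : ∀ t, g (t + 1) = 0 → g t = 0) (t : ℕ) : g t = 0 := by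
  obtain ⟨N, hN⟩ := hg.bddAbove
  have large : ∀ j t, N < t + j → g t = 0 := by
    intro j
    induction j with
    | zero => exact fun t ht => Function.notMem_support.mp fun hs => absurd (hN hs) (by omega)
    | succ j ih => exact fun t ht => h t (ih (t + 1) (by omega))
  exact large (N + 1) t (by omega)

section WeylExtension

variable {x y z : A}

theorem commutator_xy_monomial (u : kˣ) (hxy : x * y - y * x = 1)
    (hxz : x * z = (u : k) • (z * x)) (hyz : y * z = ((u⁻¹ : kˣ) : k) • (z * y)) (a b c : ℕ) :
    x * y * (x ^ a * y ^ b * z ^ c) - x ^ a * y ^ b * z ^ c * (x * y)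
      = ((b : k) - a) • (x ^ a * y ^ b * z ^ c) := by
  have hx : x * y * x - x * (x * y) = (-1 : k) • x := by
    rw [show x * y * x - x * (x * y) = -(x * (x * y - y * x)) by noncomm_ring, hxy]
    simp
  have hy : x * y * y - y * (x * y) = (1 : k) • y := by
    rw [show x * y * y - y * (x * y) = (x * y - y * x) * y by noncomm_ring, hxy, one_mul,
      one_smul]
  have hz : x * y * z - z * (x * y) = (0 : k) • z := by
    rw [zero_smul, mul_assoc, hyz, mul_smul_comm, ← mul_assoc, hxz, smul_mul_assoc, smul_smul,
      Units.inv_mul, one_smul, mul_assoc, sub_self]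
  have := commutator_mul_of_commutator_eq_smul
    (commutator_mul_of_commutator_eq_smul (commutator_pow_of_commutator_eq_smul hx a)
      (commutator_pow_of_commutator_eq_smul hy b)) (commutator_pow_of_commutator_eq_smul hz c)
  rw [this]
  congr 1
  ring

theorem repr_eq_zero_of_mem_center_of_ne [CharZero k] (u : kˣ) (hxy : x * y - y * x = 1)
    (hxz : x * z = (u : k) • (z * x)) (hyz : y * z = ((u⁻¹ : kˣ) : k) • (z * y))
    (bA : Module.Basis (ℕ × ℕ × ℕ) k A)
    (hbA : ∀ p : ℕ × ℕ × ℕ, bA p = x ^ p.1 * y ^ p.2.1 * z ^ p.2.2)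
    {m : A} (hm : m ∈ Subalgebra.center k A) {p : ℕ × ℕ × ℕ} (hp : p.1 ≠ p.2.1) :
    bA.repr m p = 0 := by
  have h := bA.repr_apply_of_apply_basis_eq_smul
    (LinearMap.mulLeft k (x * y) - LinearMap.mulRight k (x * y))
    (fun p => (p.2.1 : k) - p.1) (fun p => by
      simpa only [LinearMap.sub_apply, LinearMap.mulLeft_apply, LinearMap.mulRight_apply, hbA]
        using commutator_xy_monomial u hxy hxz hyz p.1 p.2.1 p.2.2) m p
  have hcomm : x * y * m - m * (x * y) = 0 := by
    rw [Subalgebra.mem_center_iff.mp hm, sub_self]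
  simp only [LinearMap.sub_apply, LinearMap.mulLeft_apply, LinearMap.mulRight_apply, hcomm,
    map_zero, Finsupp.coe_zero, Pi.zero_apply] at h
  refine (mul_eq_zero.mp h.symm).resolve_left ?_
  rw [sub_eq_zero, Nat.cast_inj]
  exact fun h => hp h.symm

theorem pow_succ_mul_sub_mul_pow_succ (hxy : x * y - y * x = 1) (a : ℕ) :
    x ^ (a + 1) * y - y * x ^ (a + 1) = ((a : k) + 1) • x ^ a := by
  induction a with
  | zero => simpa using hxy
  | succ a ih =>
    have : x ^ (a + 2) * y - y * x ^ (a + 2)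
        = x * (x ^ (a + 1) * y - y * x ^ (a + 1)) + (x * y - y * x) * x ^ (a + 1) := by
      rw [pow_succ' x (a + 1)]
      noncomm_ring
    rw [this, ih, hxy, mul_smul_comm, ← pow_succ', one_mul]
    push_cast
    module

theorem monomial_mul_y (u : kˣ) (hyz : y * z = ((u⁻¹ : kˣ) : k) • (z * y)) (a b c : ℕ) :
    x ^ a * y ^ b * z ^ c * y = (u : k) ^ c • (x ^ a * y ^ (b + 1) * z ^ c) := by
  have hzy : z * y = (u : k) • (y * z) := by
    simpa using mul_eq_inv_smul_mul_of_mul_eq_smul_mul hyz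
  rw [mul_assoc, pow_mul_eq_smul_mul_pow hzy, mul_smul_comm, ← mul_assoc, mul_assoc (x ^ a),
    ← pow_succ]

theorem y_mul_monomial_succ (hxy : x * y - y * x = 1) (a b c : ℕ) :
    y * (x ^ (a + 1) * y ^ b * z ^ c)
      = x ^ (a + 1) * y ^ (b + 1) * z ^ c - ((a : k) + 1) • (x ^ a * y ^ b * z ^ c) := by
  rw [← mul_assoc, ← mul_assoc, eq_sub_iff_add_eq', ← smul_mul_assoc, ← smul_mul_assoc,
    ← pow_succ_mul_sub_mul_pow_succ hxy, pow_succ' y b]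
  noncomm_ring

theorem repr_commutator_y (u : kˣ) (hxy : x * y - y * x = 1)
    (hyz : y * z = ((u⁻¹ : kˣ) : k) • (z * y)) (bA : Module.Basis (ℕ × ℕ × ℕ) k A)
    (hbA : ∀ p : ℕ × ℕ × ℕ, bA p = x ^ p.1 * y ^ p.2.1 * z ^ p.2.2) (m : A) (a b c : ℕ) :
    bA.repr (y * m - m * y) (a, b + 1, c)
      = (1 - (u : k) ^ c) * bA.repr m (a, b, c)
        - ((a : k) + 1) * bA.repr m (a + 1, b + 1, c) := by
  classical
  have key : (bA.coord (a, b + 1, c)).comp (LinearMap.mulLeft k y - LinearMap.mulRight k y)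
      = (1 - (u : k) ^ c) • bA.coord (a, b, c) - ((a : k) + 1) • bA.coord (a + 1, b + 1, c) := by
    have mul_y (p : ℕ × ℕ × ℕ) : bA p * y = (u : k) ^ p.2.2 • bA (p.1, p.2.1 + 1, p.2.2) := by
      rw [hbA, hbA]; exact monomial_mul_y u hyz _ _ _
    refine bA.ext fun ⟨a', b', c'⟩ => ?_
    rcases a' with _ | a'
    · have y_mul : y * bA (0, b', c') = bA (0, b' + 1, c') := by
        simp only [hbA, pow_zero, one_mul, pow_succ', mul_assoc]
      simp only [LinearMap.comp_apply, LinearMap.sub_apply, LinearMap.mulLeft_apply,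
        LinearMap.mulRight_apply, y_mul, mul_y, LinearMap.smul_apply, map_smul, map_sub,
        Module.Basis.coord_apply, Module.Basis.repr_self, Finsupp.single_apply, Prod.mk.injEq]
      split_ifs <;> simp_all
    · have y_mul : y * bA (a' + 1, b', c')
          = bA (a' + 1, b' + 1, c') - ((a' : k) + 1) • bA (a', b', c') := by
        rw [hbA, hbA, hbA]; exact y_mul_monomial_succ hxy _ _ _
      simp only [LinearMap.comp_apply, LinearMap.sub_apply, LinearMap.mulLeft_apply,
        LinearMap.mulRight_apply, y_mul, mul_y, LinearMap.smul_apply, map_smul, map_sub,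
        Module.Basis.coord_apply, Module.Basis.repr_self, Finsupp.single_apply, Prod.mk.injEq]
      split_ifs <;> simp_all
  simpa using LinearMap.congr_fun key m

theorem exists_eq_of_mem_center_of_repr_ne_zero [CharZero k] (u : kˣ) (hxy : x * y - y * x = 1)
    (hxz : x * z = (u : k) • (z * x)) (hyz : y * z = ((u⁻¹ : kˣ) : k) • (z * y))
    (bA : Module.Basis (ℕ × ℕ × ℕ) k A)
    (hbA : ∀ p : ℕ × ℕ × ℕ, bA p = x ^ p.1 * y ^ p.2.1 * z ^ p.2.2)
    {m : A} (hm : m ∈ Subalgebra.center k A) {p : ℕ × ℕ × ℕ} (hp : bA.repr m p ≠ 0) :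
    ∃ c, p = (0, 0, c) ∧ u ^ c = 1 := by
  obtain ⟨a, b, c⟩ := p
  obtain rfl : a = b := by
    by_contra hab
    exact hp (repr_eq_zero_of_mem_center_of_ne u hxy hxz hyz bA hbA hm hab)
  have diag (t : ℕ) : (1 - (u : k) ^ c) * bA.repr m (t, t, c)
      = ((t : k) + 1) * bA.repr m (t + 1, t + 1, c) := by
    rw [← sub_eq_zero, ← repr_commutator_y u hxy hyz bA hbA, Subalgebra.mem_center_iff.mp hm,
      sub_self, map_zero, Finsupp.coe_zero, Pi.zero_apply]
  have huc : u ^ c = 1 := by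
    by_contra huc
    have hk : (1 : k) - (u : k) ^ c ≠ 0 := by
      rw [sub_ne_zero, ne_comm, ← Units.val_pow_eq_pow_val, Ne, Units.val_eq_one]
      exact huc
    refine hp (eq_zero_of_hasFiniteSupport_of_succ (g := fun t => bA.repr m (t, t, c)) ?_
      (fun t ht => ?_) a)
    · exact (bA.repr m).hasFiniteSupport.preimage fun s _ t _ hst => by simpa using hst
    · simpa [ht, hk] using diag t
  refine ⟨c, ?_, huc⟩
  rcases a with _ | t
  · rfl
  · refine absurd ?_ hp
    have := diag t
    rw [← Units.val_pow_eq_pow_val, huc, Units.val_one, sub_self, zero_mul, eq_comm,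
      mul_eq_zero] at this
    exact this.resolve_left (Nat.cast_add_one_ne_zero t)

theorem pow_mem_center_of_pow_eq_one (u : kˣ) (hxz : x * z = (u : k) • (z * x))
    (hyz : y * z = ((u⁻¹ : kˣ) : k) • (z * y)) (bA : Module.Basis (ℕ × ℕ × ℕ) k A)
    (hbA : ∀ p : ℕ × ℕ × ℕ, bA p = x ^ p.1 * y ^ p.2.1 * z ^ p.2.2) {n : ℕ} (hun : u ^ n = 1) :
    z ^ n ∈ Subalgebra.center k A := by
  have hx : Commute (z ^ n) x := commute_pow_of_mul_eq_smul_mul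
    (mul_eq_inv_smul_mul_of_mul_eq_smul_mul hxz)
    (by rw [← Units.val_pow_eq_pow_val, inv_pow, hun, inv_one, Units.val_one])
  have hy : Commute (z ^ n) y := commute_pow_of_mul_eq_smul_mul
    (by simpa using mul_eq_inv_smul_mul_of_mul_eq_smul_mul hyz)
    (by rw [← Units.val_pow_eq_pow_val, hun, Units.val_one])
  refine bA.mem_center_of_commute fun p => ?_
  rw [hbA]
  exact (((hx.pow_right _).mul_right (hy.pow_right _)).mul_right
    ((Commute.refl z).pow_pow _ _)).symm

end WeylExtension

end

theorem stmt_3_general {k : Type*} [Field k] [CharZero k] {A : Type*} [Ring A] [Algebra k A]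
    (u : kˣ) (n : ℕ) (hn : orderOf u = n) (x y z : A)
    (hxy : x * y - y * x = 1)
    (hxz : x * z = (u : k) • (z * x))
    (hyz : y * z = ((u⁻¹ : kˣ) : k) • (z * y))
    (bA : Module.Basis (ℕ × ℕ × ℕ) k A)
    (hbA : ∀ p : ℕ × ℕ × ℕ, bA p = x ^ p.1 * y ^ p.2.1 * z ^ p.2.2) :
    Subalgebra.center k A = Algebra.adjoin k {z ^ n} := by
  refine le_antisymm (fun m hm => ?_) ?_
  · refine (Subalgebra.mem_toSubmodule _).mp <|
      Submodule.span_le.mpr ?_ (bA.mem_span_repr_support m)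
    rintro _ ⟨p, hp, rfl⟩
    obtain ⟨c, rfl, huc⟩ := exists_eq_of_mem_center_of_repr_ne_zero u hxy hxz hyz bA hbA hm
      (Finsupp.mem_support_iff.mp hp)
    obtain ⟨j, rfl⟩ : n ∣ c := hn ▸ orderOf_dvd_of_pow_eq_one huc
    rw [SetLike.mem_coe, hbA, pow_zero, pow_zero, one_mul, one_mul, pow_mul]
    exact pow_mem (Algebra.self_mem_adjoin_singleton k _) j
  · rw [Algebra.adjoin_le_iff, Set.singleton_subset_iff]
    exact pow_mem_center_of_pow_eq_one u hxz hyz bA hbA (hn ▸ pow_orderOf_eq_one u)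

/-- Let `λ ∈ k*` have finite multiplicative order `n` (char k = 0). Then the
center of the algebra `A` generated by `x, y, z` with relations `x*y - y*x = 1`,
`x*z = λ • (z*x)`, `y*z = λ⁻¹ • (z*y)` (with PBW basis `x^a y^b z^c`) is exactly the
polynomial subalgebra `k[z^n]` generated by `z^n`. -/
theorem stmt_3 {k : Type*} [Field k] [CharZero k] {A : Type*} [Ring A] [Algebra k A]
    (u : kˣ) (n : ℕ) (hn0 : 0 < n) (hn : orderOf u = n) (x y z : A)
    (hxy : x * y - y * x = 1)
    (hxz : x * z = (u : k) • (z * x))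
    (hyz : y * z = ((u⁻¹ : kˣ) : k) • (z * y))
    (bA : Module.Basis (ℕ × ℕ × ℕ) k A)
    (hbA : ∀ p : ℕ × ℕ × ℕ, bA p = x ^ p.1 * y ^ p.2.1 * z ^ p.2.2) :
    Subalgebra.center k A = Algebra.adjoin k {z ^ n} :=
  stmt_3_general u n hn x y z hxy hxz hyz bA hbA
end

section
/- Suppose the family (λ_{i,j})_{1≤i<j≤n} generates a free abelian subgroup of k* of rank n(n-1)/2, and extend to a multiplicatively antisymmetric matrix by λ_{j,i} = λ_{i,j}^{-1}, λ_{i,i}=1. Fix r ≤ n and let Q(Λ) = (λ̃_{k,i}) be the associated (n+r)×(n+r) block matrix. Let C = { ρ ∈ ℕ^{r+n} : for each i, ρ_i = 0 or ∏_k λ̃_{k,i}^{ρ_k} = 1 }. If ρ ∈ C and there exists i > 2r with ρ_i ≠ 0, then ρ = ρ_i · e_i (all other coordinates of ρ vanish). -/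
/-!
Index the Λ-rows and columns by `s < n`. For `ρ = (ρ_x, ρ_y)` put `d_s = ρ_{y_s} - ρ_{x_s}`
(with `ρ_{x_s} = 0` for `s ≥ r`). The product down a column of `Q(Λ)` belonging to the
Λ-index `c` is `∏_s λ_{s,c}^{± d_s}`, and since `λ_{s,c} = λ_{c,s}⁻¹` this is an integer relation
among the `λ_{i,j}`, `i < j`; independence forces `d_s = 0` for every `s ≠ c`.
Column `i` has Λ-index `a = i - r ≥ r`, so `d_s = 0` for `s ≠ a`, while `d_a = ρ_i ≠ 0`.
An `x`-column `m < r` with `ρ_m ≠ 0` would force `d_a = 0`, so `ρ_x = 0`, and then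
`ρ_{y_s} = d_s = 0` for `s ≠ a`.
-/

/-- The `(n+r) × (n+r)` block matrix `Q(Λ)` (0-based indices: positions `0,…,r-1` are
the `x`-indices, positions `r,…,r+n-1` the `y`-indices): blocks
`[[Λ_r, Λ_{r,n}⁻¹],[Λ_{n,r}⁻¹, Λ]]`. -/
def Qmat {k : Type*} [Field k] (r : ℕ) (lam : ℕ → ℕ → kˣ) : ℕ → ℕ → kˣ := fun i j =>
  if i < r then
    (if j < r then lam i j else (lam i (j - r))⁻¹)
  else
    (if j < r then (lam (i - r) j)⁻¹ else lam (i - r) (j - r))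

open Finset

section
variable {G : Type*} [CommGroup G] {n : ℕ} {lam : ℕ → ℕ → G}

theorem prod_square_zpow_eq_prod_triangle
    (hanti : ∀ i j, i < n → j < n → lam i j * lam j i = 1)
    (hdiag : ∀ i, i < n → lam i i = 1) (E : ℕ → ℕ → ℤ) :
    ∏ i ∈ range n, ∏ j ∈ range n, lam i j ^ E i j =
      ∏ i ∈ range n, ∏ j ∈ Ico (i + 1) n, lam i j ^ (E i j - E j i) := by
  have hsplit : ∀ i ∈ range n, ∏ j ∈ range n, lam i j ^ E i j =
      (∏ j ∈ range i, lam i j ^ E i j) * ∏ j ∈ Ico (i + 1) n, lam i j ^ E i j := by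
    intro i hi
    rw [← prod_range_mul_prod_Ico _ (mem_range.mp hi : i + 1 ≤ n), prod_range_succ,
      hdiag i (mem_range.mp hi), one_zpow, mul_one]
  have hlower : ∏ i ∈ range n, ∏ j ∈ range i, lam i j ^ E i j =
      ∏ i ∈ range n, ∏ j ∈ Ico (i + 1) n, lam i j ^ (-E j i) := by
    rw [prod_comm' (t' := range n) (s' := fun j => Ico (j + 1) n)]
    · refine prod_congr rfl fun i hi => prod_congr rfl fun j hj => ?_
      rw [eq_inv_of_mul_eq_one_left (hanti i j (mem_range.mp hi) (mem_Ico.mp hj).2), inv_zpow',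
        neg_neg]
    · intro i j
      simp only [mem_range, mem_Ico]
      omega
  rw [prod_congr rfl hsplit, prod_mul_distrib, hlower, ← prod_mul_distrib]
  refine prod_congr rfl fun i _ => ?_
  rw [← prod_mul_distrib]
  refine prod_congr rfl fun j _ => ?_
  rw [← zpow_add, neg_add_eq_sub]

theorem eq_zero_of_prod_col_zpow_eq_one
    (hanti : ∀ i j, i < n → j < n → lam i j * lam j i = 1)
    (hdiag : ∀ i, i < n → lam i i = 1)
    (hfree : ∀ m : ℕ → ℕ → ℤ,
      (∏ i ∈ range n, ∏ j ∈ Ico (i + 1) n, lam i j ^ m i j) = 1 →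
      ∀ i j, i < j → j < n → m i j = 0)
    {a : ℕ} (ha : a < n) {e : ℕ → ℤ} (h : ∏ s ∈ range n, lam s a ^ e s = 1)
    {s : ℕ} (hs : s < n) (hsa : s ≠ a) : e s = 0 := by
  set E : ℕ → ℕ → ℤ := fun i j => if j = a then e i else 0
  have hE := hfree (fun i j => E i j - E j i) <| by
    rw [← prod_square_zpow_eq_prod_triangle hanti hdiag]
    simpa [E, ha] using h
  rcases Nat.lt_or_gt_of_ne hsa with hlt | hgt
  · simpa [E, hsa] using hE s a hlt ha
  · simpa [E, hsa] using hE a s hgt hs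
end

def netExponent (r : ℕ) (ρ : ℕ → ℕ) (s : ℕ) : ℤ := ρ (r + s) - if s < r then (ρ s : ℤ) else 0

theorem prod_zpow_netExponent {G : Type*} [CommGroup G] {n r : ℕ} (hr : r ≤ n) (g : ℕ → G)
    (ρ : ℕ → ℕ) :
    ∏ s ∈ range n, g s ^ netExponent r ρ s =
      (∏ s ∈ range n, g s ^ ρ (r + s)) / ∏ s ∈ range r, g s ^ ρ s := by
  have hx : ∏ s ∈ range n, g s ^ (if s < r then (ρ s : ℤ) else 0) = ∏ s ∈ range r, g s ^ ρ s := by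
    rw [← prod_range_mul_prod_Ico _ hr, prod_eq_one (s := Ico r n) fun s hs => ?_, mul_one]
    · exact prod_congr rfl fun s hs => by rw [if_pos (mem_range.mp hs), zpow_natCast]
    · rw [if_neg (mem_Ico.mp hs).1.not_gt, zpow_zero]
  simp_rw [netExponent, zpow_sub, prod_mul_distrib, prod_inv_distrib, hx, zpow_natCast,
    div_eq_mul_inv]

section
variable {k : Type*} [Field k] {n r : ℕ} (lam : ℕ → ℕ → kˣ) (ρ : ℕ → ℕ)

theorem prod_Qmat_col_of_le (hr : r ≤ n) {c : ℕ} (hc : r ≤ c) :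
    ∏ t ∈ range (r + n), Qmat r lam t c ^ ρ t =
      ∏ s ∈ range n, lam s (c - r) ^ netExponent r ρ s := by
  rw [prod_zpow_netExponent hr, prod_range_add, div_eq_inv_mul]
  congr 1
  · rw [← prod_inv_distrib]
    refine prod_congr rfl fun t ht => ?_
    simp [Qmat, mem_range.mp ht, Nat.not_lt.mpr hc]
  · refine prod_congr rfl fun s _ => ?_
    simp [Qmat, Nat.not_lt.mpr hc]

theorem prod_Qmat_col_of_lt (hr : r ≤ n) {c : ℕ} (hc : c < r) :
    ∏ t ∈ range (r + n), Qmat r lam t c ^ ρ t =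
      (∏ s ∈ range n, lam s c ^ netExponent r ρ s)⁻¹ := by
  rw [prod_zpow_netExponent hr, inv_div, div_eq_mul_inv, prod_range_add, ← prod_inv_distrib]
  congr 1
  · refine prod_congr rfl fun t ht => ?_
    simp [Qmat, mem_range.mp ht, hc]
  · refine prod_congr rfl fun s _ => ?_
    simp [Qmat, hc]
end

/-- Suppose `(λ_{i,j})_{i<j<n}` is multiplicatively independent in `k*`
(free abelian of maximal rank), extended to a multiplicatively antisymmetric matrix.
Let `C ⊆ ℕ^{r+n}` consist of those `ρ` such that for each `i`, `ρ_i = 0` or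
`∏_k λ̃_{k,i}^{ρ_k} = 1` (where `λ̃ = Q(Λ)`). If `ρ ∈ C` and `ρ_i ≠ 0` for some index
`i` in the purely quantum range (0-based: `2r ≤ i < r+n`), then all other coordinates of
`ρ` vanish, i.e. `ρ = ρ_i · e_i`. -/
theorem stmt_9 {k : Type*} [Field k] {n r : ℕ} (hr : r ≤ n)
    (lam : ℕ → ℕ → kˣ)
    (hanti : ∀ i j, i < n → j < n → lam i j * lam j i = 1)
    (hdiag : ∀ i, i < n → lam i i = 1)
    (hfree : ∀ m : ℕ → ℕ → ℤ,
      (∏ i ∈ range n, ∏ j ∈ Ico (i + 1) n, lam i j ^ m i j) = 1 →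
      ∀ i j, i < j → j < n → m i j = 0)
    (ρ : ℕ → ℕ) (hρsupp : ∀ i, r + n ≤ i → ρ i = 0)
    (hC : ∀ i < r + n, ρ i = 0 ∨ (∏ t ∈ range (r + n), Qmat r lam t i ^ ρ t) = 1)
    (i : ℕ) (hi1 : 2 * r ≤ i) (hi2 : i < r + n) (hρi : ρ i ≠ 0) :
    ∀ m, m ≠ i → ρ m = 0 := by
  set a := i - r
  have hia : i = r + a := by omega
  have hy : ∀ s < n, s ≠ a → netExponent r ρ s = 0 := by
    have hcol := (hC i hi2).resolve_left hρi
    rw [prod_Qmat_col_of_le lam ρ hr (by omega)] at hcol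
    exact fun s hs hsa => eq_zero_of_prod_col_zpow_eq_one hanti hdiag hfree (by omega) hcol hs hsa
  have hx : ∀ m < r, ρ m = 0 := by
    intro m hm
    by_contra hρm
    have hcol := (hC m (by omega)).resolve_left hρm
    rw [prod_Qmat_col_of_lt lam ρ hr hm, inv_eq_one] at hcol
    have ha := eq_zero_of_prod_col_zpow_eq_one hanti hdiag hfree (by omega) hcol
      (by omega : a < n) (by omega)
    rw [netExponent, if_neg (by omega), ← hia] at ha
    omega
  intro m hm
  rcases lt_or_ge m r with hmr | hmr
  · exact hx m hmr
  rcases lt_or_ge m (r + n) with hmn | hmn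
  · have hs := hy (m - r) (by omega) (by omega)
    rw [netExponent, Nat.add_sub_cancel' hmr] at hs
    split_ifs at hs with hsr
    · rw [hx _ hsr] at hs
      omega
    · omega
  · exact hρsupp m hmn
end

section
/- With Λ extended multiplicatively antisymmetric from a multiplicatively independent family (λ_{i,j})_{i<j}, and C ⊆ ℕ^{r+n} defined by: ρ ∈ C iff for every index i, either ρ_i = 0 (with additionally ρ_{i+r}=0 when i ≤ r) or ∏_k λ̃_{k,i}^{ρ_k} = 1; then ρ ∈ C if and only if for every relevant index i the condition ∏_k λ̃_{k,i}^{ρ_k} = 1 is equivalent to: ρ_k = ρ_{k+r} for all k ≤ r with k ≠ i, and ρ_k = 0 for all k > 2r with k ≠ i. -/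
open Finset

theorem prod_upper_zpow_eq_prod_column {G : Type*} [CommGroup G] {n j : ℕ} (lam : ℕ → ℕ → G)
    (hanti : ∀ a b, a < n → b < n → lam a b * lam b a = 1) (hdiag : lam j j = 1)
    (hj : j < n) (m : ℕ → ℤ) :
    ∏ a ∈ range n, ∏ b ∈ Ico (a + 1) n,
        lam a b ^ ((if b = j then m a else 0) - (if a = j then m b else 0)) =
      ∏ s ∈ range n, lam s j ^ m s := by
  have hbelow : ∏ a ∈ range n, ∏ b ∈ Ico (a + 1) n, lam a b ^ (if b = j then m a else 0) =
      ∏ a ∈ range j, lam a j ^ m a := by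
    have hmem : ∀ a, j ∈ Ico (a + 1) n ↔ a ∈ range j := fun a => by simp [hj]
    simp only [pow_ite, zpow_zero, prod_ite_eq', hmem, prod_ite_mem, range_inter_range,
      min_eq_right hj.le]
  have habove : ∏ a ∈ range n, ∏ b ∈ Ico (a + 1) n, lam a b ^ (if a = j then m b else 0) =
      (∏ b ∈ Ico (j + 1) n, lam b j ^ m b)⁻¹ := by
    rw [prod_eq_single_of_mem j (mem_range.2 hj) fun a _ ha => by simp [ha], ← prod_inv_distrib]
    refine prod_congr rfl fun b hb => ?_
    rw [if_pos rfl, ← inv_zpow, inv_eq_of_mul_eq_one_right (hanti b j (mem_Ico.1 hb).2 hj)]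
  have hcolumn : ∏ s ∈ range n, lam s j ^ m s =
      (∏ a ∈ range j, lam a j ^ m a) * ∏ b ∈ Ico (j + 1) n, lam b j ^ m b := by
    rw [← prod_range_mul_prod_Ico _ (Nat.succ_le_of_lt hj), prod_range_succ, hdiag, one_zpow,
      mul_one]
  simp only [zpow_sub, prod_mul_distrib, prod_inv_distrib, hbelow, habove, inv_inv, hcolumn]

theorem prod_column_zpow_eq_one_iff {G : Type*} [CommGroup G] {n j : ℕ} (lam : ℕ → ℕ → G)
    (hanti : ∀ a b, a < n → b < n → lam a b * lam b a = 1) (hdiag : ∀ a, a < n → lam a a = 1)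
    (hfree : ∀ m : ℕ → ℕ → ℤ,
      (∏ a ∈ range n, ∏ b ∈ Ico (a + 1) n, lam a b ^ m a b) = 1 →
      ∀ a b, a < b → b < n → m a b = 0)
    (hj : j < n) (m : ℕ → ℤ) :
    ∏ s ∈ range n, lam s j ^ m s = 1 ↔ ∀ s, s < n → s ≠ j → m s = 0 := by
  refine ⟨fun h s hs hsj => ?_, fun h => prod_eq_one fun s hs => ?_⟩
  · have hzero := hfree _ ((prod_upper_zpow_eq_prod_column lam hanti (hdiag j hj) hj m).trans h)
    rcases hsj.lt_or_gt with hlt | hgt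
    · simpa [hlt.ne] using hzero s j hlt hj
    · simpa [hgt.ne'] using hzero j s hgt hs
  · obtain rfl | hsj := eq_or_ne s j
    · rw [hdiag s hj, one_zpow]
    · rw [h s (mem_range.1 hs) hsj, zpow_zero]

def foldedExponent (r : ℕ) (ρ : ℕ → ℕ) (s : ℕ) : ℤ :=
  (if s < r then (ρ s : ℤ) else 0) - ρ (r + s)

theorem prod_range_add_pow_eq_prod_zpow_foldedExponent {G : Type*} [CommGroup G] {r n : ℕ}
    (hr : r ≤ n) (g f : ℕ → G) (hlow : ∀ t, t < r → g t = f t)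
    (hhigh : ∀ s, s < n → g (r + s) = (f s)⁻¹) (ρ : ℕ → ℕ) :
    ∏ t ∈ range (r + n), g t ^ ρ t = ∏ s ∈ range n, f s ^ foldedExponent r ρ s := by
  have hx : ∏ t ∈ range r, g t ^ ρ t = ∏ s ∈ range n, f s ^ (if s < r then (ρ s : ℤ) else 0) := by
    rw [← prod_range_mul_prod_Ico _ hr,
      prod_eq_one (s := Ico r n) fun s hs => by simp [(mem_Ico.1 hs).1.not_gt], mul_one]
    exact prod_congr rfl fun t ht => by simp [mem_range.1 ht, hlow t (mem_range.1 ht)]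
  have hy : ∏ s ∈ range n, g (r + s) ^ ρ (r + s) = (∏ s ∈ range n, f s ^ (ρ (r + s) : ℤ))⁻¹ := by
    rw [← prod_inv_distrib]
    refine prod_congr rfl fun s hs => ?_
    rw [hhigh s (mem_range.1 hs), zpow_natCast, inv_pow]
  simp only [prod_range_add, hx, hy, foldedExponent, zpow_sub, prod_mul_distrib, prod_inv_distrib]

theorem prod_Qmat_column_eq_one_iff {k : Type*} [Field k] {r n : ℕ} (hr : r ≤ n)
    (lam : ℕ → ℕ → kˣ) (ρ : ℕ → ℕ) (i : ℕ) :
    ∏ t ∈ range (r + n), Qmat r lam t i ^ ρ t = 1 ↔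
      ∏ s ∈ range n, lam s (if i < r then i else i - r) ^ foldedExponent r ρ s = 1 := by
  split_ifs with hi
  · rw [prod_range_add_pow_eq_prod_zpow_foldedExponent hr _ (fun s => lam s i)
      (fun t ht => by simp [Qmat, ht, hi]) (fun s _ => by simp [Qmat, hi])]
  · have hfold := prod_range_add_pow_eq_prod_zpow_foldedExponent hr
      (fun t => (Qmat r lam t i)⁻¹) (fun s => lam s (i - r))
      (fun t ht => by simp [Qmat, ht, hi]) (fun s _ => by simp [Qmat, hi]) ρ
    rw [← hfold, ← inv_eq_one]
    simp only [inv_pow, prod_inv_distrib]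

theorem foldedExponent_eq_zero_iff {r n : ℕ} (hr : r ≤ n) (ρ : ℕ → ℕ) {i : ℕ}
    (hi : i < r ∨ (2 * r ≤ i ∧ i < r + n)) :
    (∀ s, s < n → s ≠ (if i < r then i else i - r) → foldedExponent r ρ s = 0) ↔
      ((∀ t, t < r → t ≠ i → ρ t = ρ (t + r)) ∧
        (∀ t, 2 * r ≤ t → t < r + n → t ≠ i → ρ t = 0)) := by
  simp only [foldedExponent]
  constructor
  · intro h
    refine ⟨fun t ht hti => ?_, fun t hrt htn hti => ?_⟩
    · have := h t (by omega) (by split_ifs <;> omega)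
      rwa [if_pos ht, sub_eq_zero, Nat.cast_inj, add_comm] at this
    · have := h (t - r) (by omega) (by split_ifs <;> omega)
      rw [if_neg (by omega), Nat.add_sub_cancel' (by omega)] at this
      omega
  · rintro ⟨hx, hy⟩ s hs hsj
    split_ifs with hsr
    · rw [hx s hsr (by split_ifs at hsj <;> omega), add_comm, sub_self]
    · rw [hy (r + s) (by omega) (by omega) (by split_ifs at hsj <;> omega)]
      simp

open Finset in
theorem stmt_10_general {k : Type*} [Field k] {n r : ℕ} (hr : r ≤ n)
    (lam : ℕ → ℕ → kˣ)
    (hanti : ∀ i j, i < n → j < n → lam i j * lam j i = 1)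
    (hdiag : ∀ i, i < n → lam i i = 1)
    (hfree : ∀ m : ℕ → ℕ → ℤ,
      (∏ i ∈ range n, ∏ j ∈ Ico (i + 1) n, lam i j ^ m i j) = 1 →
      ∀ i j, i < j → j < n → m i j = 0)
    (ρ : ℕ → ℕ)
    (i : ℕ) (hi : i < r ∨ (2 * r ≤ i ∧ i < r + n)) :
    (∏ t ∈ range (r + n), Qmat r lam t i ^ ρ t) = 1 ↔
      ((∀ t, t < r → t ≠ i → ρ t = ρ (t + r)) ∧
        (∀ t, 2 * r ≤ t → t < r + n → t ≠ i → ρ t = 0)) := by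
  have hj : (if i < r then i else i - r) < n := by split_ifs <;> omega
  rw [prod_Qmat_column_eq_one_iff hr, prod_column_zpow_eq_one_iff lam hanti hdiag hfree hj,
    foldedExponent_eq_zero_iff hr ρ hi]

open Finset in
/-- With `Λ` extended multiplicatively antisymmetric from a multiplicatively
independent family `(λ_{i,j})_{i<j}`, for every relevant index `i` (0-based: `i < r` or
`2r ≤ i < r+n`), the multiplicative condition `∏_k λ̃_{k,i}^{ρ_k} = 1` is equivalent to
the linear system: `ρ_k = ρ_{k+r}` for all `k < r` with `k ≠ i`, and `ρ_k = 0` for all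
`2r ≤ k < r+n` with `k ≠ i`. -/
theorem stmt_10 {k : Type*} [Field k] {n r : ℕ} (hr : r ≤ n)
    (lam : ℕ → ℕ → kˣ)
    (hanti : ∀ i j, i < n → j < n → lam i j * lam j i = 1)
    (hdiag : ∀ i, i < n → lam i i = 1)
    (hfree : ∀ m : ℕ → ℕ → ℤ,
      (∏ i ∈ range n, ∏ j ∈ Ico (i + 1) n, lam i j ^ m i j) = 1 →
      ∀ i j, i < j → j < n → m i j = 0)
    (ρ : ℕ → ℕ) (hρsupp : ∀ i, r + n ≤ i → ρ i = 0)
    (i : ℕ) (hi : i < r ∨ (2 * r ≤ i ∧ i < r + n)) :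
    (∏ t ∈ range (r + n), Qmat r lam t i ^ ρ t) = 1 ↔
      ((∀ t, t < r → t ≠ i → ρ t = ρ (t + r)) ∧
        (∀ t, 2 * r ≤ t → t < r + n → t ≠ i → ρ t = 0)) :=
  stmt_10_general hr lam hanti hdiag hfree ρ i hi
end

section
/- Let λ ∈ k* have finite order n ≥ 2 and let A be generated by x, y, z with xy - yx = 1, xz = λzx, yz = λ⁻¹zy. Then for 1 ≤ t ≤ n-1, the element z^t is not a sum of commutators: z^t ∉ [A, A], where [A,A] is the k-span of all commutators ab - ba. -/
/-!
A linear functional `φ : A → k` vanishes on `[A, A]` as soon as it vanishes on `[g, ·]` for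
every generator `g`. On the PBW basis put `φ (x^a y^a z^t) = a! / (1 - λ^t)^a` and `φ = 0` on
all other monomials. The relations move `x`, `y`, `z` across a monomial at the cost of the
scalars `λ^{±c}` and of the Weyl terms `a x^{a-1}`, `b y^{b-1}`; with these weights the
contributions to `φ [x, ·]`, `φ [y, ·]`, `φ [z, ·]` cancel, while `φ (z^t) = 1`. The weights
only make sense because `λ^t ≠ 1`. Below, `q = λ` and `p = λ⁻¹`.
-/

section Commutators

variable {k A M : Type*} [CommRing k] [Ring A] [Algebra k A] [AddCommGroup M] [Module k M]

theorem LinearMap.map_commutator_eq_zero_of_basis {ι : Type*} (b : Module.Basis ι k A)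
    (φ : A →ₗ[k] M) (g : A) (h : ∀ i, φ (g * b i - b i * g) = 0) (r : A) :
    φ (g * r - r * g) = 0 := by
  have key : φ ∘ₗ (LinearMap.mulLeft k g - LinearMap.mulRight k g) = 0 := b.ext h
  simpa using LinearMap.congr_fun key r

theorem LinearMap.span_commutators_le_ker_of_adjoin_eq_top {s : Set A}
    (hs : Algebra.adjoin k s = ⊤) (φ : A →ₗ[k] M)
    (hφ : ∀ g ∈ s, ∀ r, φ (g * r - r * g) = 0) :
    Submodule.span k {w : A | ∃ a b : A, w = a * b - b * a} ≤ LinearMap.ker φ := by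
  have key : ∀ p r : A, φ (p * r - r * p) = 0 := by
    intro p
    have hp : p ∈ Algebra.adjoin k s := hs ▸ Algebra.mem_top
    induction hp using Algebra.adjoin_induction with
    | mem g hg => exact hφ g hg
    | algebraMap c => intro r; simp [Algebra.commutes]
    | add p q _ _ hp hq =>
      intro r
      rw [add_mul, mul_add, add_sub_add_comm, map_add, hp, hq, add_zero]
    | mul p q _ _ hp hq =>
      intro r
      have : p * q * r - r * (p * q) =
          (p * (q * r) - q * r * p) + (q * (r * p) - r * p * q) := by
        noncomm_ring
      rw [this, map_add, hp, hq, add_zero]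
  rw [Submodule.span_le]
  rintro _ ⟨a, b, rfl⟩
  exact key a b

end Commutators

section QCommute

variable {k A : Type*} [CommSemiring k] [Semiring A] [Algebra k A] {g h : A} {s : k}

theorem mul_pow_eq_smul_of_mul_eq_smul (H : g * h = s • (h * g)) (m : ℕ) :
    g * h ^ m = s ^ m • (h ^ m * g) := by
  induction m with
  | zero => simp
  | succ m ih =>
    rw [pow_succ, ← mul_assoc, ih, smul_mul_assoc, mul_assoc, H, mul_smul_comm, smul_smul,
      ← mul_assoc, ← pow_succ, ← pow_succ]

theorem pow_mul_eq_smul_of_mul_eq_smul (H : g * h = s • (h * g)) (m : ℕ) :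
    g ^ m * h = s ^ m • (h * g ^ m) := by
  induction m with
  | zero => simp
  | succ m ih =>
    rw [pow_succ, mul_assoc, H, mul_smul_comm, ← mul_assoc, ih, smul_mul_assoc, smul_smul,
      mul_assoc, ← pow_succ, ← pow_succ']

end QCommute

section Weyl

variable {A : Type*} [Ring A] {x y : A}

theorem pow_mul_sub_mul_pow_of_mul_sub_mul_eq_one (hxy : x * y - y * x = 1) (a : ℕ) :
    x ^ a * y - y * x ^ a = a • x ^ (a - 1) := by
  induction a with
  | zero => simp
  | succ a ih =>
    have h : x ^ (a + 1) * y - y * x ^ (a + 1) =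
        x * (x ^ a * y - y * x ^ a) + (x * y - y * x) * x ^ a := by
      rw [pow_succ']; noncomm_ring
    rw [h, ih, hxy, one_mul, mul_smul_comm, succ_nsmul]
    rcases a with _ | a
    · simp
    · rw [Nat.add_sub_cancel, ← pow_succ', Nat.add_sub_cancel]

theorem mul_pow_sub_pow_mul_of_mul_sub_mul_eq_one (hxy : x * y - y * x = 1) (b : ℕ) :
    x * y ^ b - y ^ b * x = b • y ^ (b - 1) := by
  induction b with
  | zero => simp
  | succ b ih =>
    have h : x * y ^ (b + 1) - y ^ (b + 1) * x =
        (x * y ^ b - y ^ b * x) * y + y ^ b * (x * y - y * x) := by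
      rw [pow_succ]; noncomm_ring
    rw [h, ih, hxy, mul_one, smul_mul_assoc, succ_nsmul]
    rcases b with _ | b
    · simp
    · rw [Nat.add_sub_cancel, ← pow_succ, Nat.add_sub_cancel]

end Weyl

section PBW

variable {k A : Type*} [Field k] [Ring A] [Algebra k A] {x y z : A} {p q : k}

theorem commutator_x_monomial (hxy : x * y - y * x = 1) (hzx : z * x = p • (x * z))
    (a b c : ℕ) :
    x * (x ^ a * y ^ b * z ^ c) - x ^ a * y ^ b * z ^ c * x =
      (1 - p ^ c) • (x ^ (a + 1) * y ^ b * z ^ c) +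
        (p ^ c * b) • (x ^ a * y ^ (b - 1) * z ^ c) := by
  have hybx : y ^ b * x = x * y ^ b - b • y ^ (b - 1) := by
    rw [← mul_pow_sub_pow_mul_of_mul_sub_mul_eq_one hxy]; abel
  have hl : x * (x ^ a * y ^ b * z ^ c) = x ^ (a + 1) * y ^ b * z ^ c := by
    simp only [pow_succ', mul_assoc]
  have hr : x ^ a * y ^ b * z ^ c * x = p ^ c • (x ^ a * (y ^ b * x) * z ^ c) := by
    rw [mul_assoc, pow_mul_eq_smul_of_mul_eq_smul hzx, mul_smul_comm]; simp only [mul_assoc]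
  rw [hl, hr, hybx, mul_sub, ← mul_assoc (x ^ a) x, ← pow_succ]
  simp only [sub_mul, mul_smul_comm, smul_mul_assoc, ← Nat.cast_smul_eq_nsmul k]
  module

theorem commutator_y_monomial (hxy : x * y - y * x = 1) (hzy : z * y = q • (y * z))
    (a b c : ℕ) :
    y * (x ^ a * y ^ b * z ^ c) - x ^ a * y ^ b * z ^ c * y =
      (1 - q ^ c) • (x ^ a * y ^ (b + 1) * z ^ c) -
        (a : k) • (x ^ (a - 1) * y ^ b * z ^ c) := by
  have hyxa : y * x ^ a = x ^ a * y - a • x ^ (a - 1) := by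
    rw [← pow_mul_sub_mul_pow_of_mul_sub_mul_eq_one hxy]; abel
  have hl : y * (x ^ a * y ^ b * z ^ c) = y * x ^ a * y ^ b * z ^ c := by
    simp only [mul_assoc]
  have hr : x ^ a * y ^ b * z ^ c * y = q ^ c • (x ^ a * y ^ (b + 1) * z ^ c) := by
    rw [mul_assoc, pow_mul_eq_smul_of_mul_eq_smul hzy, mul_smul_comm, pow_succ]
    simp only [mul_assoc]
  rw [hl, hr, hyxa]
  simp only [pow_succ' y b, sub_mul, smul_mul_assoc, mul_assoc, ← Nat.cast_smul_eq_nsmul k]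
  module

theorem commutator_z_monomial (hzx : z * x = p • (x * z)) (hzy : z * y = q • (y * z))
    (a b c : ℕ) :
    z * (x ^ a * y ^ b * z ^ c) - x ^ a * y ^ b * z ^ c * z =
      (p ^ a * q ^ b - 1) • (x ^ a * y ^ b * z ^ (c + 1)) := by
  have hl : z * (x ^ a * y ^ b * z ^ c) = (p ^ a * q ^ b) • (x ^ a * y ^ b * z ^ (c + 1)) := by
    rw [← mul_assoc, ← mul_assoc, mul_pow_eq_smul_of_mul_eq_smul hzx, smul_mul_assoc,
      smul_mul_assoc, mul_assoc (x ^ a), mul_pow_eq_smul_of_mul_eq_smul hzy, pow_succ']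
    simp only [mul_smul_comm, smul_mul_assoc, smul_smul, mul_assoc]
  rw [hl, mul_assoc _ (z ^ c), ← pow_succ, sub_smul, one_smul]

end PBW

section Trace

variable {k A : Type*} [Field k] [Ring A] [Algebra k A]

/-- `w` will be `(1 - q ^ t)⁻¹`: then `a! * w ^ a` solves the recursion
`(1 - q ^ t) * W (a + 1) = (a + 1) * W a` that `φ [y, ·] = 0` imposes. -/
def pbwTraceWeight (w : k) (t a b c : ℕ) : k :=
  if a = b ∧ c = t then a.factorial * w ^ a else 0

variable {w p q : k} {t : ℕ}

theorem pbwTraceWeight_x (hw : (1 - q ^ t) * w = 1) (hpq : p * q = 1) (a b c : ℕ) :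
    (1 - p ^ c) * pbwTraceWeight w t (a + 1) b c + p ^ c * b * pbwTraceWeight w t a (b - 1) c
      = 0 := by
  unfold pbwTraceWeight
  by_cases hc : c = t
  · subst hc
    rcases b with _ | b
    · simp
    by_cases hab : a = b
    · subst hab
      have hpqc : p ^ c * q ^ c = 1 := by rw [← mul_pow, hpq, one_pow]
      simp only [true_and, if_true, Nat.add_sub_cancel, Nat.factorial_succ]
      push_cast
      linear_combination (a + 1) * a.factorial * w ^ a * (-p ^ c * hw - w * hpqc)
    · simp [hab]
  · simp [hc]

theorem pbwTraceWeight_y (hw : (1 - q ^ t) * w = 1) (a b c : ℕ) :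
    (1 - q ^ c) * pbwTraceWeight w t a (b + 1) c - a * pbwTraceWeight w t (a - 1) b c = 0 := by
  unfold pbwTraceWeight
  by_cases hc : c = t
  · subst hc
    rcases a with _ | a
    · simp
    by_cases hab : a = b
    · subst hab
      simp only [true_and, if_true, Nat.add_sub_cancel, Nat.factorial_succ]
      push_cast
      linear_combination (a + 1) * a.factorial * w ^ a * hw
    · simp [hab]
  · simp [hc]

theorem pbwTraceWeight_z (hpq : p * q = 1) (a b c : ℕ) :
    (p ^ a * q ^ b - 1) * pbwTraceWeight w t a b c = 0 := by
  unfold pbwTraceWeight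
  split_ifs with h
  · rw [h.1, ← mul_pow, hpq, one_pow, sub_self, zero_mul]
  · rw [mul_zero]

noncomputable def pbwTrace (bA : Module.Basis (ℕ × ℕ × ℕ) k A) (w : k) (t : ℕ) :
    A →ₗ[k] k :=
  bA.constr k fun i => pbwTraceWeight w t i.1 i.2.1 i.2.2

variable {x y z : A} {bA : Module.Basis (ℕ × ℕ × ℕ) k A}

theorem pbwTrace_monomial (hbA : ∀ i : ℕ × ℕ × ℕ, bA i = x ^ i.1 * y ^ i.2.1 * z ^ i.2.2)
    (a b c : ℕ) : pbwTrace bA w t (x ^ a * y ^ b * z ^ c) = pbwTraceWeight w t a b c := by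
  rw [← hbA (a, b, c), pbwTrace, Module.Basis.constr_basis]

theorem pbwTrace_commutator_generator_eq_zero (hxy : x * y - y * x = 1)
    (hzx : z * x = p • (x * z)) (hzy : z * y = q • (y * z)) (hpq : p * q = 1)
    (hbA : ∀ i : ℕ × ℕ × ℕ, bA i = x ^ i.1 * y ^ i.2.1 * z ^ i.2.2)
    (hw : (1 - q ^ t) * w = 1) :
    ∀ g ∈ ({x, y, z} : Set A), ∀ r, pbwTrace bA w t (g * r - r * g) = 0 := by
  rintro g (rfl | rfl | rfl) <;>
    refine LinearMap.map_commutator_eq_zero_of_basis bA _ _ fun ⟨a, b, c⟩ => ?_ <;>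
    rw [hbA]
  · simp only [commutator_x_monomial hxy hzx, map_add, map_smul, pbwTrace_monomial hbA,
      smul_eq_mul]
    exact pbwTraceWeight_x hw hpq a b c
  · simp only [commutator_y_monomial hxy hzy, map_sub, map_smul, pbwTrace_monomial hbA,
      smul_eq_mul]
    exact pbwTraceWeight_y hw a b c
  · simp only [commutator_z_monomial hzx hzy, map_smul, pbwTrace_monomial hbA, smul_eq_mul]
    exact pbwTraceWeight_z hpq a b (c + 1)

end Trace

theorem adjoin_eq_top_of_pbw_basis {k A : Type*} [Field k] [Ring A] [Algebra k A] {x y z : A}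
    (bA : Module.Basis (ℕ × ℕ × ℕ) k A)
    (hbA : ∀ i : ℕ × ℕ × ℕ, bA i = x ^ i.1 * y ^ i.2.1 * z ^ i.2.2) :
    Algebra.adjoin k {x, y, z} = ⊤ := by
  refine eq_top_iff.mpr fun r _ => ?_
  have hspan : Submodule.span k (Set.range bA) ≤
      Subalgebra.toSubmodule (Algebra.adjoin k {x, y, z}) := by
    rw [Submodule.span_le]
    rintro _ ⟨⟨a, b, c⟩, rfl⟩
    rw [hbA, SetLike.mem_coe, Subalgebra.mem_toSubmodule]
    exact mul_mem (mul_mem (pow_mem (Algebra.subset_adjoin (by simp)) a)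
      (pow_mem (Algebra.subset_adjoin (by simp)) b))
      (pow_mem (Algebra.subset_adjoin (by simp)) c)
  exact hspan (bA.span_eq ▸ Submodule.mem_top)

theorem pow_notMem_span_commutators {k A : Type*} [Field k] [Ring A] [Algebra k A] {x y z : A}
    {p q : k} (hxy : x * y - y * x = 1) (hzx : z * x = p • (x * z)) (hzy : z * y = q • (y * z))
    (hpq : p * q = 1) (bA : Module.Basis (ℕ × ℕ × ℕ) k A)
    (hbA : ∀ i : ℕ × ℕ × ℕ, bA i = x ^ i.1 * y ^ i.2.1 * z ^ i.2.2) {t : ℕ}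
    (ht : q ^ t ≠ 1) :
    z ^ t ∉ Submodule.span k {w : A | ∃ a b : A, w = a * b - b * a} := by
  intro hmem
  have hw : (1 - q ^ t) * (1 - q ^ t)⁻¹ = 1 := mul_inv_cancel₀ (sub_ne_zero.mpr ht.symm)
  have hker := LinearMap.span_commutators_le_ker_of_adjoin_eq_top
    (adjoin_eq_top_of_pbw_basis bA hbA) _
    (pbwTrace_commutator_generator_eq_zero hxy hzx hzy hpq hbA hw) hmem
  have hone : pbwTrace bA (1 - q ^ t)⁻¹ t (z ^ t) = 1 := by
    simpa [pbwTraceWeight] using pbwTrace_monomial (w := (1 - q ^ t)⁻¹) (t := t) hbA 0 0 t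
  rw [LinearMap.mem_ker, hone] at hker
  exact one_ne_zero hker

theorem stmt_18_general {k : Type*} [Field k] {A : Type*} [Ring A] [Algebra k A]
    (u : kˣ) (n : ℕ) (hord : orderOf u = n) (x y z : A)
    (hxy : x * y - y * x = 1)
    (hxz : x * z = (u : k) • (z * x))
    (hyz : y * z = ((u⁻¹ : kˣ) : k) • (z * y))
    (bA : Module.Basis (ℕ × ℕ × ℕ) k A)
    (hbA : ∀ p : ℕ × ℕ × ℕ, bA p = x ^ p.1 * y ^ p.2.1 * z ^ p.2.2)
    (t : ℕ) (ht1 : 1 ≤ t) (ht2 : t ≤ n - 1) :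
    z ^ t ∉ Submodule.span k {w : A | ∃ a b : A, w = a * b - b * a} := by
  have hzx : z * x = ((u⁻¹ : kˣ) : k) • (x * z) := by
    rw [hxz, smul_smul, Units.inv_mul, one_smul]
  have hzy : z * y = (u : k) • (y * z) := by
    rw [hyz, smul_smul, Units.mul_inv, one_smul]
  have hut : (u : k) ^ t ≠ 1 := by
    rw [← Units.val_pow_eq_pow_val, Ne, Units.val_eq_one]
    exact pow_ne_one_of_lt_orderOf (by omega) (by omega)
  exact pow_notMem_span_commutators hxy hzx hzy (Units.inv_mul u) bA hbA hut

/-- Let `λ ∈ k*` have finite multiplicative order `n ≥ 2` (char k = 0),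
and let `A` be the algebra generated by `x, y, z` with relations `x*y - y*x = 1`,
`x*z = λ • (z*x)`, `y*z = λ⁻¹ • (z*y)` (with PBW basis `x^a y^b z^c`). Then for
`1 ≤ t ≤ n-1`, the element `z^t` is not a sum of commutators: `z^t ∉ [A, A]`, the
`k`-span of all commutators `ab - ba`. -/
theorem stmt_18 {k : Type*} [Field k] [CharZero k] {A : Type*} [Ring A] [Algebra k A]
    (u : kˣ) (n : ℕ) (hn : 2 ≤ n) (hord : orderOf u = n) (x y z : A)
    (hxy : x * y - y * x = 1)
    (hxz : x * z = (u : k) • (z * x))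
    (hyz : y * z = ((u⁻¹ : kˣ) : k) • (z * y))
    (bA : Module.Basis (ℕ × ℕ × ℕ) k A)
    (hbA : ∀ p : ℕ × ℕ × ℕ, bA p = x ^ p.1 * y ^ p.2.1 * z ^ p.2.2)
    (t : ℕ) (ht1 : 1 ≤ t) (ht2 : t ≤ n - 1) :
    z ^ t ∉ Submodule.span k {w : A | ∃ a b : A, w = a * b - b * a} :=
  stmt_18_general u n hord x y z hxy hxz hyz bA hbA t ht1 ht2
end
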